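/- arXiv:2102.07491 — 3 statements merged into one kernel-verified Lean document; each statement's English description precedes it below -/
import Mathlib

section
/- Dual optimality at equilibrium (Theorem 2(ii), dual part): if (p, μˢ, μᵈ) is a hedonic equilibrium and u x = max(max_z (α x z + p z), 0), v y = max(max_z (γ z y − p z), 0) are the associated indirect utilities, then (u, v, p) is dual feasible and minimizes the dual objective ∑_x n x · u' x + ∑_y m y · v' y among all dual feasible triples (u', v', p'). -/
/-!
Weak duality: for any feasible flow, sum `α x z + p' z ≤ u' x` against `μˢ` and
`γ z y - p' z ≤ v' y` against `μᵈ`; the price terms are transfers that cancel by market clearing, so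
total surplus is at most the dual objective. At an equilibrium, rationality and full participation
are exactly complementary slackness for the indirect utilities, so for them both inequalities are
equalities and the bound is attained.
-/

open Finset MeasureTheory Real

variable {X Y Z : Type*} [Fintype X] [Fintype Y] [Fintype Z]
  [Nonempty X] [Nonempty Y] [Nonempty Z]

/-- A pair of supply/demand functions is a feasible flow. -/
def FeasibleFlow (n : X → ℝ) (m : Y → ℝ) (μs : X → Z → ℝ) (μd : Z → Y → ℝ) : Prop :=
  (∀ x z, 0 ≤ μs x z) ∧ (∀ z y, 0 ≤ μd z y) ∧
    (∀ x, ∑ z, μs x z ≤ n x) ∧ (∀ y, ∑ z, μd z y ≤ m y) ∧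
    (∀ z, ∑ x, μs x z = ∑ y, μd z y)

/-- Indirect utility of a producer of type `x` facing prices `p`. -/
noncomputable def indirectU (α : X → Z → ℝ) (p : Z → ℝ) (x : X) : ℝ :=
  max (univ.sup' univ_nonempty fun z => α x z + p z) 0

/-- Indirect utility of a consumer of type `y` facing prices `p`. -/
noncomputable def indirectV (γ : Z → Y → ℝ) (p : Z → ℝ) (y : Y) : ℝ :=
  max (univ.sup' univ_nonempty fun z => γ z y - p z) 0

/-- A triple `(p, μs, μd)` is a hedonic equilibrium. -/
def HedonicEquilibrium (n : X → ℝ) (m : Y → ℝ) (α : X → Z → ℝ) (γ : Z → Y → ℝ)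
    (p : Z → ℝ) (μs : X → Z → ℝ) (μd : Z → Y → ℝ) : Prop :=
  FeasibleFlow n m μs μd ∧
    (∀ x z, 0 < μs x z → α x z + p z = indirectU α p x) ∧
    (∀ z y, 0 < μd z y → γ z y - p z = indirectV γ p y) ∧
    (∀ x, 0 < indirectU α p x → ∑ z, μs x z = n x) ∧
    (∀ y, 0 < indirectV γ p y → ∑ z, μd z y = m y)

/-- Primal (social welfare) objective of a flow. -/
def primalObj (α : X → Z → ℝ) (γ : Z → Y → ℝ) (μs : X → Z → ℝ) (μd : Z → Y → ℝ) : ℝ :=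
  (∑ x, ∑ z, μs x z * α x z) + ∑ z, ∑ y, μd z y * γ z y

/-- Dual feasibility of surpluses and prices. -/
def DualFeasible (α : X → Z → ℝ) (γ : Z → Y → ℝ) (u : X → ℝ) (v : Y → ℝ) (p : Z → ℝ) : Prop :=
  (∀ x, 0 ≤ u x) ∧ (∀ y, 0 ≤ v y) ∧ (∀ x z, α x z + p z ≤ u x) ∧ (∀ z y, γ z y - p z ≤ v y)

/-- Dual objective. -/
def dualObj (n : X → ℝ) (m : Y → ℝ) (u : X → ℝ) (v : Y → ℝ) : ℝ :=
  (∑ x, n x * u x) + ∑ y, m y * v y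

section RowSums

variable {ι R : Type*} [Semiring R] [PartialOrder R] {s : Finset ι} {w f : ι → R} {N U : R}

theorem Finset.sum_mul_le_mul_of_sum_le [IsOrderedRing R] (hw : ∀ i ∈ s, 0 ≤ w i)
    (hs : ∑ i ∈ s, w i ≤ N) (hU : 0 ≤ U) (hf : ∀ i ∈ s, f i ≤ U) :
    ∑ i ∈ s, w i * f i ≤ N * U :=
  calc ∑ i ∈ s, w i * f i ≤ ∑ i ∈ s, w i * U :=
        sum_le_sum fun i hi => mul_le_mul_of_nonneg_left (hf i hi) (hw i hi)
    _ = (∑ i ∈ s, w i) * U := (sum_mul ..).symm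
    _ ≤ N * U := mul_le_mul_of_nonneg_right hs hU

theorem Finset.sum_mul_eq_mul_of_slackness (hw : ∀ i ∈ s, 0 ≤ w i)
    (hf : ∀ i ∈ s, 0 < w i → f i = U) (hU : 0 ≤ U) (hs : 0 < U → ∑ i ∈ s, w i = N) :
    ∑ i ∈ s, w i * f i = N * U := by
  have hrow : ∑ i ∈ s, w i * f i = (∑ i ∈ s, w i) * U := by
    rw [sum_mul]
    refine sum_congr rfl fun i hi => ?_
    rcases (hw i hi).lt_or_eq with hpos | hzero
    · rw [hf i hi hpos]
    · simp [← hzero]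
  rcases hU.lt_or_eq with hpos | hzero
  · rw [hrow, hs hpos]
  · simp [hrow, ← hzero]

end RowSums

section Duality

variable {X Y Z : Type*} [Fintype X] [Fintype Y] [Fintype Z]
  {n : X → ℝ} {m : Y → ℝ} {α : X → Z → ℝ} {γ : Z → Y → ℝ} {μs : X → Z → ℝ} {μd : Z → Y → ℝ}

theorem primalObj_eq_sum_surplus (hclear : ∀ z, ∑ x, μs x z = ∑ y, μd z y) (q : Z → ℝ) :
    primalObj α γ μs μd =
      (∑ x, ∑ z, μs x z * (α x z + q z)) + ∑ y, ∑ z, μd z y * (γ z y - q z) := by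
  have htransfer : ∑ x, ∑ z, μs x z * q z = ∑ z, ∑ y, μd z y * q z := by
    rw [sum_comm]
    exact sum_congr rfl fun z _ => by rw [← sum_mul, ← sum_mul, hclear z]
  rw [sum_comm (s := univ (α := Y))]
  simp only [primalObj, mul_add, mul_sub, sum_add_distrib, sum_sub_distrib]
  linarith

theorem FeasibleFlow.primalObj_le_dualObj (hflow : FeasibleFlow n m μs μd) {u : X → ℝ}
    {v : Y → ℝ} {p : Z → ℝ} (hdual : DualFeasible α γ u v p) :
    primalObj α γ μs μd ≤ dualObj n m u v := by
  obtain ⟨hμs, hμd, hsupply, hdemand, hclear⟩ := hflow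
  obtain ⟨hu, hv, hαu, hγv⟩ := hdual
  rw [primalObj_eq_sum_surplus hclear p, dualObj]
  gcongr with x _ y _
  · exact sum_mul_le_mul_of_sum_le (fun z _ => hμs x z) (hsupply x) (hu x) fun z _ => hαu x z
  · exact sum_mul_le_mul_of_sum_le (fun z _ => hμd z y) (hdemand y) (hv y) fun z _ => hγv z y

end Duality

section Equilibrium

variable {X Y Z : Type*} [Fintype Z] [Nonempty Z] {α : X → Z → ℝ} {γ : Z → Y → ℝ} {p : Z → ℝ}

theorem dualFeasible_indirect : DualFeasible α γ (indirectU α p) (indirectV γ p) p :=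
  ⟨fun _ => le_max_right _ _, fun _ => le_max_right _ _,
    fun x z => le_max_of_le_left (le_sup' (fun z => α x z + p z) (mem_univ z)),
    fun z y => le_max_of_le_left (le_sup' (fun z => γ z y - p z) (mem_univ z))⟩

theorem HedonicEquilibrium.dualObj_eq_primalObj [Fintype X] [Fintype Y] {n : X → ℝ} {m : Y → ℝ}
    {μs : X → Z → ℝ} {μd : Z → Y → ℝ}
    (heq : HedonicEquilibrium n m α γ p μs μd) :
    dualObj n m (indirectU α p) (indirectV γ p) = primalObj α γ μs μd := by
  obtain ⟨⟨hμs, hμd, -, -, hclear⟩, hoptS, hoptD, hfullS, hfullD⟩ := heq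
  obtain ⟨hu, hv, -, -⟩ := dualFeasible_indirect (α := α) (γ := γ) (p := p)
  rw [primalObj_eq_sum_surplus hclear p, dualObj]
  congr 1 <;> refine sum_congr rfl fun _ _ => Eq.symm ?_
  · exact sum_mul_eq_mul_of_slackness (fun z _ => hμs _ z) (fun z _ => hoptS _ z) (hu _) (hfullS _)
  · exact sum_mul_eq_mul_of_slackness (fun z _ => hμd z _) (fun z _ => hoptD z _) (hv _) (hfullD _)

end Equilibrium

theorem equilibrium_dual_optimal_general (n : X → ℝ) (m : Y → ℝ)
    (α : X → Z → ℝ) (γ : Z → Y → ℝ)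
    (p : Z → ℝ) (μs : X → Z → ℝ) (μd : Z → Y → ℝ)
    (heq : HedonicEquilibrium n m α γ p μs μd) :
    DualFeasible α γ (indirectU α p) (indirectV γ p) p ∧
      ∀ (u' : X → ℝ) (v' : Y → ℝ) (p' : Z → ℝ), DualFeasible α γ u' v' p' →
        dualObj n m (indirectU α p) (indirectV γ p) ≤ dualObj n m u' v' :=
  ⟨dualFeasible_indirect, fun _ _ _ hdual =>
    heq.dualObj_eq_primalObj.trans_le (heq.1.primalObj_le_dualObj hdual)⟩

/-- Theorem 2(ii), dual part: the indirect utilities at equilibrium are dual feasible and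
minimize the dual objective. -/
theorem equilibrium_dual_optimal (n : X → ℝ) (m : Y → ℝ)
    (hn : ∀ x, 0 ≤ n x) (hm : ∀ y, 0 ≤ m y) (α : X → Z → ℝ) (γ : Z → Y → ℝ)
    (p : Z → ℝ) (μs : X → Z → ℝ) (μd : Z → Y → ℝ)
    (heq : HedonicEquilibrium n m α γ p μs μd) :
    DualFeasible α γ (indirectU α p) (indirectV γ p) p ∧
      ∀ (u' : X → ℝ) (v' : Y → ℝ) (p' : Z → ℝ), DualFeasible α γ u' v' p' →
        dualObj n m (indirectU α p) (indirectV γ p) ≤ dualObj n m u' v' :=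
  equilibrium_dual_optimal_general n m α γ p μs μd heq
end

section
/- Integrality of hedonic equilibrium (Theorem 2(iii)): if n x and m y are nonnegative integers for every x and y (i.e., n and m take values in ℕ), then there exists a hedonic equilibrium (p, μˢ, μᵈ) in which every value μˢ x z and μᵈ z y is a nonnegative integer. -/
open Finset MeasureTheory Real

variable {X Y Z : Type*} [Fintype X] [Fintype Y] [Fintype Z]
  [Nonempty X] [Nonempty Y] [Nonempty Z]

/-!
Let `p` minimise the dual objective `∑ₓ nₓ uₓ(p) + ∑ᵧ mᵧ vᵧ(p)`. Lowering by a small `t` the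
prices of the qualities optimal for a set `S` of producer types with `u > 0` changes the objective
by at most `t` times (mass of the consumers sharing an optimal quality with `S`) minus (mass of
`S`), so minimality gives Hall's condition for matching the unit producers of these types to unit
consumers sharing an optimal quality; symmetrically for the consumers with `v > 0`. The
Mendelsohn–Dulmage theorem merges the two matchings into one covering both, and counting its
pairs by type and traded quality gives an integral equilibrium.
-/

open Filter Topology

section IndirectUtility

variable {ι : Type*} (a : ι → Z → ℝ) (p : Z → ℝ) (i : ι)

theorem indirectU_nonneg : 0 ≤ indirectU a p i := le_max_right _ _

theorem add_le_indirectU (z : Z) : a i z + p z ≤ indirectU a p i :=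
  (le_sup' (fun z => a i z + p z) (mem_univ z)).trans (le_max_left _ _)

theorem indirectU_le {c : ℝ} (h0 : 0 ≤ c) (h : ∀ z, a i z + p z ≤ c) : indirectU a p i ≤ c :=
  max_le (sup'_le _ _ fun z _ => h z) h0

theorem indirectU_mono {p q : Z → ℝ} (h : p ≤ q) : indirectU a p i ≤ indirectU a q i :=
  indirectU_le a p i (indirectU_nonneg a q i) fun z => by
    linarith [h z, add_le_indirectU a q i z]

theorem indirectU_add_le {c : Z → ℝ} {t : ℝ} (ht : 0 ≤ t) (hc : ∀ z, c z ≤ t) :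
    indirectU a (p + c) i ≤ indirectU a p i + t :=
  indirectU_le a _ i (by linarith [indirectU_nonneg a p i]) fun z => by
    rw [Pi.add_apply]
    linarith [hc z, add_le_indirectU a p i z]

theorem indirectU_le_of_le_max {A : ℝ} (hA : ∀ z, a i z ≤ A) {q : Z → ℝ}
    (h : ∀ z, p z ≤ max (-A) (q z)) : indirectU a p i ≤ indirectU a q i :=
  indirectU_le a p i (indirectU_nonneg a q i) fun z => by
    rcases le_max_iff.1 (h z) with hz | hz
    · linarith [hA z, indirectU_nonneg a q i]
    · linarith [add_le_indirectU a q i z]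

@[fun_prop]
theorem continuous_indirectU : Continuous fun p => indirectU a p i :=
  (Continuous.finset_sup'_apply _ fun z _ => continuous_const.add (continuous_apply z)).max
    continuous_const

theorem indirectV_eq_indirectU_neg {κ : Type*} (γ : Z → κ → ℝ) (y : κ) :
    indirectV γ p y = indirectU (fun y z => γ z y) (-p) y := by
  simp only [indirectV, indirectU, Pi.neg_apply, sub_eq_add_neg]

/-- Empty when every payoff `a i z + p z` is negative: `indirectU a p i` is then the outside
option `0`. -/
noncomputable def optimalQualities : Finset Z :=
  {z | a i z + p z = indirectU a p i}

theorem mem_optimalQualities {z : Z} :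
    z ∈ optimalQualities a p i ↔ a i z + p z = indirectU a p i := by
  simp [optimalQualities]

theorem eventually_add_lt_indirectU :
    ∀ᶠ t in 𝓝[>] (0 : ℝ), ∀ z ∉ optimalQualities a p i, a i z + p z + t < indirectU a p i := by
  refine eventually_all.2 fun z => ?_
  by_cases hz : z ∈ optimalQualities a p i
  · exact .of_forall fun _ h => absurd hz h
  · have hlt : a i z + p z < indirectU a p i :=
      (add_le_indirectU a p i z).lt_of_ne ((mem_optimalQualities a p i).not.1 hz)
    filter_upwards [nhdsWithin_le_nhds (eventually_lt_nhds (sub_pos.2 hlt))] with t ht _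
    linarith

variable {a p i}

theorem eventually_indirectU_sub_indicator_le {W : Finset Z} (hu : 0 < indirectU a p i)
    (hW : optimalQualities a p i ⊆ W) :
    ∀ᶠ t in 𝓝[>] (0 : ℝ),
      indirectU a (p - (W : Set Z).indicator fun _ => t) i ≤ indirectU a p i - t := by
  filter_upwards [eventually_add_lt_indirectU a p i,
    nhdsWithin_le_nhds (eventually_lt_nhds hu), self_mem_nhdsWithin] with t hslack htu ht
  refine indirectU_le a _ i (by linarith) fun z => ?_
  have hind : 0 ≤ (W : Set Z).indicator (fun _ => t) z := Set.indicator_nonneg (fun _ _ => ht.le) z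
  by_cases hz : z ∈ optimalQualities a p i
  · simp only [Pi.sub_apply, Set.indicator_of_mem (mem_coe.2 (hW hz))]
    linarith [(mem_optimalQualities a p i).1 hz]
  · simp only [Pi.sub_apply]
    linarith [hslack z hz]

theorem eventually_indirectU_add_indicator_le {W : Finset Z}
    (hW : Disjoint (optimalQualities a p i) W) :
    ∀ᶠ t in 𝓝[>] (0 : ℝ),
      indirectU a (p + (W : Set Z).indicator fun _ => t) i ≤ indirectU a p i := by
  filter_upwards [eventually_add_lt_indirectU a p i] with t hslack
  refine indirectU_le a _ i (indirectU_nonneg a p i) fun z => ?_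
  by_cases hz : z ∈ W
  · simp only [Pi.add_apply, Set.indicator_of_mem (mem_coe.2 hz)]
    linarith [hslack z (disjoint_right.1 hW hz)]
  · simp only [Pi.add_apply, Set.indicator_of_notMem (mt mem_coe.1 hz), add_zero]
    exact add_le_indirectU a p i z

end IndirectUtility

section DualValue

variable {ι κ : Type*} [Fintype ι] [Fintype κ]

theorem dualObj_mono {n : ι → ℝ} {m : κ → ℝ} (hn : ∀ i, 0 ≤ n i) (hm : ∀ j, 0 ≤ m j)
    {u u' : ι → ℝ} {v v' : κ → ℝ} (hu : ∀ i, u i ≤ u' i) (hv : ∀ j, v j ≤ v' j) :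
    dualObj n m u v ≤ dualObj n m u' v' := by
  unfold dualObj
  gcongr with i _ j _
  exacts [hn i, hu i, hm j, hv j]

/-- Consumer types are described by their payoffs `β j z = γ z j` and face the prices `-p`, so
that both sides of the market are treated alike. -/
noncomputable def dualValue (n : ι → ℝ) (m : κ → ℝ) (α : ι → Z → ℝ) (β : κ → Z → ℝ)
    (p : Z → ℝ) : ℝ :=
  dualObj n m (indirectU α p) (indirectU β (-p))

variable (n : ι → ℝ) (m : κ → ℝ) (α : ι → Z → ℝ) (β : κ → Z → ℝ)

theorem dualValue_neg (p : Z → ℝ) : dualValue n m α β (-p) = dualValue m n β α p := by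
  simp only [dualValue, dualObj, neg_neg, add_comm]

theorem continuous_dualValue : Continuous (dualValue n m α β) := by
  unfold dualValue dualObj
  fun_prop

variable {n m}

/-- Clamping all prices to `[-A, A]`, with `A` above every payoff, raises no indirect utility
on either side, so a minimiser over the compact box `[-A, A]^Z` is a global one. -/
theorem exists_forall_dualValue_le (hn : ∀ i, 0 ≤ n i) (hm : ∀ j, 0 ≤ m j) :
    ∃ p, ∀ q, dualValue n m α β p ≤ dualValue n m α β q := by
  obtain ⟨A₁, hA₁⟩ := (Set.finite_range fun e : ι × Z => α e.1 e.2).bddAbove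
  obtain ⟨A₂, hA₂⟩ := (Set.finite_range fun e : κ × Z => β e.1 e.2).bddAbove
  set A := max 0 (max A₁ A₂)
  have hα : ∀ i z, α i z ≤ A := fun i z =>
    (hA₁ ⟨(i, z), rfl⟩).trans ((le_max_left _ _).trans (le_max_right _ _))
  have hβ : ∀ j z, β j z ≤ A := fun j z =>
    (hA₂ ⟨(j, z), rfl⟩).trans ((le_max_right _ _).trans (le_max_right _ _))
  have hA : -A ≤ A := by linarith [le_max_left 0 (max A₁ A₂)]
  obtain ⟨p, -, hp⟩ := (isCompact_Icc (a := fun _ : Z => -A) (b := fun _ => A)).exists_isMinOn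
    ⟨fun _ => 0, fun _ => by simpa using hA, fun _ => by simpa using hA⟩
    (continuous_dualValue n m α β).continuousOn
  refine ⟨p, fun q => ?_⟩
  let c : Z → ℝ := fun z => max (-A) (min A (q z))
  calc dualValue n m α β p ≤ dualValue n m α β c :=
        hp ⟨fun _ => le_max_left _ _, fun _ => max_le hA (min_le_left _ _)⟩
    _ ≤ dualValue n m α β q := by
        refine dualObj_mono hn hm (fun i => indirectU_le_of_le_max α c i (hα i) fun z => ?_)
          (fun j => indirectU_le_of_le_max β (-c) j (hβ j) fun z => ?_)
        · exact max_le_max le_rfl (min_le_right _ _)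
        · rcases le_total A (q z) with h | h
          · simp only [Pi.neg_apply, c, min_eq_left h, max_eq_right hA, le_max_left]
          · simp only [Pi.neg_apply, c, min_eq_right h]
            exact le_max_of_le_right (neg_le_neg (le_max_right _ _))

open Classical in
theorem sum_le_sum_of_forall_dualValue_le (hn : ∀ i, 0 ≤ n i) (hm : ∀ j, 0 ≤ m j) {p : Z → ℝ}
    (hp : ∀ q, dualValue n m α β p ≤ dualValue n m α β q) {s : Finset ι}
    (hs : ∀ i ∈ s, 0 < indirectU α p i) :
    ∑ i ∈ s, n i ≤
      ∑ j with ∃ i ∈ s, ¬Disjoint (optimalQualities α p i) (optimalQualities β (-p) j), m j := by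
  set T : Finset κ :=
    {j | ∃ i ∈ s, ¬Disjoint (optimalQualities α p i) (optimalQualities β (-p) j)}
  set W := s.biUnion (optimalQualities α p)
  set δ : ℝ → Z → ℝ := fun t => (W : Set Z).indicator fun _ => t
  obtain ⟨t, ⟨hdrop, hstay⟩, ht⟩ : ∃ t,
      ((∀ i, i ∈ s → indirectU α (p - δ t) i ≤ indirectU α p i - t) ∧
        ∀ j, j ∉ T → indirectU β (-p + δ t) j ≤ indirectU β (-p) j) ∧ 0 < t := by
    refine ((Filter.eventually_all.2 fun i => Filter.eventually_imp_distrib_left.2 fun hi =>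
      eventually_indirectU_sub_indicator_le (hs i hi) (subset_biUnion_of_mem _ hi)).and
      (Filter.eventually_all.2 fun j => Filter.eventually_imp_distrib_left.2 fun hj =>
      eventually_indirectU_add_indicator_le ?_)).and self_mem_nhdsWithin |>.exists
    refine (disjoint_biUnion_right _ _ _).2 fun i hi => disjoint_comm.1 ?_
    exact not_not.1 fun h => hj (mem_filter.2 ⟨mem_univ j, i, hi, h⟩)
  have hδ : ∀ z, 0 ≤ δ t z ∧ δ t z ≤ t := fun z => by
    by_cases hz : z ∈ (W : Set Z) <;> simp [δ, hz, ht.le]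
  have hsupply : ∑ i, n i * indirectU α (p - δ t) i ≤
      ∑ i, n i * indirectU α p i - t * ∑ i ∈ s, n i := by
    rw [mul_sum, ← Fintype.sum_ite_mem s, ← sum_sub_distrib]
    refine sum_le_sum fun i _ => ?_
    split_ifs with hi
    · nlinarith [hdrop i hi, hn i]
    · have := indirectU_mono α i (show p - δ t ≤ p from fun z => by simp [(hδ z).1])
      nlinarith [hn i]
  have hdemand : ∑ j, m j * indirectU β (-(p - δ t)) j ≤
      ∑ j, m j * indirectU β (-p) j + t * ∑ j ∈ T, m j := by
    rw [neg_sub', sub_neg_eq_add, mul_sum, ← Fintype.sum_ite_mem T, ← sum_add_distrib]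
    refine sum_le_sum fun j _ => ?_
    split_ifs with hj
    · nlinarith [indirectU_add_le β (-p) j ht.le fun z => (hδ z).2, hm j]
    · nlinarith [hstay j hj, hm j]
  have := hp (p - δ t)
  simp only [dualValue, dualObj] at this
  exact le_of_mul_le_mul_left (by linarith) ht

end DualValue

theorem exists_injective_units_of_sum_le {ι κ : Type*} [Fintype ι] [Fintype κ] (k : ι → ℕ)
    (l : κ → ℕ) (r : ι → κ → Prop) [∀ i j, Decidable (r i j)] (D : Set ι)
    (hall : ∀ s : Finset ι, (∀ i ∈ s, i ∈ D) → ∑ i ∈ s, k i ≤ ∑ j with ∃ i ∈ s, r i j, l j) :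
    ∃ f : {u : Σ i, Fin (k i) // u.1 ∈ D} → Σ j, Fin (l j),
      Function.Injective f ∧ ∀ u, r u.1.1 (f u).1 := by
  classical
  let partners (u : {u : Σ i, Fin (k i) // u.1 ∈ D}) : Finset (Σ j, Fin (l j)) := {v | r u.1.1 v.1}
  obtain ⟨f, hf, hfr⟩ := (all_card_le_biUnion_card_iff_exists_injective partners).1 fun s => by
    set s' := s.image fun u => u.1.1
    set N : Finset κ := {j | ∃ i ∈ s', r i j}
    calc #s ≤ #(s'.sigma fun i => (univ : Finset (Fin (k i)))) :=
          card_le_card_of_injOn (fun u => u.1)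
            (fun u hu => mem_sigma.2 ⟨mem_image_of_mem _ hu, mem_univ _⟩)
            fun _ _ _ _ h => Subtype.ext h
      _ ≤ #(N.sigma fun j => (univ : Finset (Fin (l j)))) := by
          simpa only [card_sigma, card_univ, Fintype.card_fin] using
            hall s' fun i hi => by
              obtain ⟨u, -, rfl⟩ := mem_image.1 hi
              exact u.2
      _ ≤ #(s.biUnion partners) := card_le_card fun v hv => by
          obtain ⟨i, hi, hr⟩ := (mem_filter.1 (mem_sigma.1 hv).1).2
          obtain ⟨u, hu, rfl⟩ := mem_image.1 hi
          exact mem_biUnion.2 ⟨u, hu, mem_filter.2 ⟨mem_univ _, hr⟩⟩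
  exact ⟨f, hf, fun u => (mem_filter.1 (hfr u)).2⟩

/-- The Mendelsohn–Dulmage theorem. The consumers matched by `g` are a fixed point `T` of
`S ↦ Cd \ f '' (Pd \ g '' S)`, as in the proof of the Schröder–Bernstein theorem; the remaining
producers of `Pd` keep their partners under `f`. -/
theorem exists_matching_covering {P C : Type*} (r : P → C → Prop) {Pd : Set P} {Cd : Set C}
    {f : Pd → C} (hf : Function.Injective f) (hfr : ∀ i : Pd, r i (f i))
    {g : Cd → P} (hg : Function.Injective g) (hgr : ∀ j : Cd, r (g j) j) :
    ∃ M : Set (P × C), (∀ e ∈ M, r e.1 e.2) ∧ M.InjOn Prod.fst ∧ M.InjOn Prod.snd ∧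
      (∀ a ∈ Pd, ∃ e ∈ M, e.1 = a) ∧ ∀ c ∈ Cd, ∃ e ∈ M, e.2 = c := by
  let Φ : Set Cd →o Set Cd :=
    { toFun := fun S => {j | (j : C) ∉ f '' {i : Pd | (i : P) ∉ g '' S}}
      monotone' := fun S S' hS j hj ⟨i, hi, hij⟩ =>
        hj ⟨i, fun ⟨j', hj', h⟩ => hi ⟨j', hS hj', h⟩, hij⟩ }
  set T := OrderHom.lfp Φ
  have hT : ∀ j, j ∈ T ↔ (j : C) ∉ f '' {i : Pd | (i : P) ∉ g '' T} := fun j => by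
    rw [← Set.ext_iff.1 (OrderHom.map_lfp Φ) j]
    rfl
  refine ⟨(fun j : Cd => (g j, (j : C))) '' T ∪
    (fun i : Pd => ((i : P), f i)) '' {i : Pd | (i : P) ∉ g '' T},
    ?_, ?_, ?_, fun a ha => ?_, fun c hc => ?_⟩
  · rintro _ (⟨j, -, rfl⟩ | ⟨i, -, rfl⟩)
    exacts [hgr j, hfr i]
  · rintro _ (⟨j, hj, rfl⟩ | ⟨i, hi, rfl⟩) _ (⟨j', hj', rfl⟩ | ⟨i', hi', rfl⟩) h
    · rw [hg h]
    · exact absurd ⟨j, hj, h⟩ hi'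
    · exact absurd ⟨j', hj', h.symm⟩ hi
    · rw [Subtype.ext h]
  · rintro _ (⟨j, hj, rfl⟩ | ⟨i, hi, rfl⟩) _ (⟨j', hj', rfl⟩ | ⟨i', hi', rfl⟩) h
    · rw [Subtype.ext h]
    · exact absurd ⟨i', hi', h.symm⟩ ((hT j).1 hj)
    · exact absurd ⟨i, hi, h⟩ ((hT j').1 hj')
    · rw [hf h]
  · by_cases hg' : a ∈ g '' T
    · obtain ⟨j, hj, rfl⟩ := hg'
      exact ⟨_, .inl ⟨j, hj, rfl⟩, rfl⟩
    · exact ⟨_, .inr ⟨⟨a, ha⟩, hg', rfl⟩, rfl⟩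
  · by_cases hj : ⟨c, hc⟩ ∈ T
    · exact ⟨_, .inl ⟨_, hj, rfl⟩, rfl⟩
    · obtain ⟨i, hi, hic⟩ := not_not.1 (mt (hT _).2 hj)
      exact ⟨_, .inr ⟨i, hi, rfl⟩, hic⟩

section UnitFlow

variable {E ι ζ : Type*} [DecidableEq ι] [DecidableEq ζ] (M : Finset E) (typ : E → ι) (q : E → ζ)

def unitFlow (i : ι) (z : ζ) : ℕ := #{e ∈ M | typ e = i ∧ q e = z}

theorem sum_unitFlow_right [Fintype ζ] (i : ι) :
    ∑ z, unitFlow M typ q i z = #{e ∈ M | typ e = i} := by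
  rw [card_eq_sum_card_fiberwise (f := q) (t := univ) fun _ _ => mem_coe.2 (mem_univ _)]
  simp only [unitFlow, filter_filter]

theorem sum_unitFlow_left [Fintype ι] (z : ζ) :
    ∑ i, unitFlow M typ q i z = #{e ∈ M | q e = z} := by
  rw [card_eq_sum_card_fiberwise (f := typ) (t := univ) fun _ _ => mem_coe.2 (mem_univ _)]
  simp only [unitFlow, filter_filter, and_comm]

theorem exists_mem_of_unitFlow_pos {i : ι} {z : ζ} (h : 0 < unitFlow M typ q i z) :
    ∃ e ∈ M, typ e = i ∧ q e = z := by
  obtain ⟨e, he⟩ := card_pos.1 h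
  exact ⟨e, (mem_filter.1 he).1, (mem_filter.1 he).2⟩

end UnitFlow

section Units

variable {E ι : Type*} [DecidableEq ι] {k : ι → ℕ} (M : Finset E) {φ : E → Σ i, Fin (k i)}

theorem card_filter_sigma_fst_le (hφ : Set.InjOn φ ↑M) (i : ι) :
    #{e ∈ M | (φ e).1 = i} ≤ k i := by
  simpa using card_le_card_of_injOn (t := range (k i)) (fun e => ((φ e).2 : ℕ))
    (fun e he => by
      rw [coe_range, Set.mem_Iio, ← (mem_filter.1 he).2]
      exact (φ e).2.isLt)
    fun e he e' he' h => hφ (mem_filter.1 he).1 (mem_filter.1 he').1 <|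
      Sigma.ext ((mem_filter.1 he).2.trans (mem_filter.1 he').2.symm)
        ((Fin.heq_ext_iff (by rw [(mem_filter.1 he).2, (mem_filter.1 he').2])).2 h)

theorem card_filter_sigma_fst_eq (hφ : Set.InjOn φ ↑M) {i : ι}
    (hcov : ∀ u : Σ i, Fin (k i), u.1 = i → ∃ e ∈ M, φ e = u) :
    #{e ∈ M | (φ e).1 = i} = k i := by
  refine (card_filter_sigma_fst_le M hφ i).antisymm ?_
  simpa using card_le_card_of_surjOn (s := {e ∈ M | (φ e).1 = i}) (t := range (k i))
    (fun e => ((φ e).2 : ℕ)) fun a ha => by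
      obtain ⟨e, he, hφe⟩ := hcov ⟨i, a, mem_range.1 ha⟩ rfl
      exact ⟨e, mem_filter.2 ⟨he, by rw [hφe]⟩,
        congrArg (fun u : Σ i, Fin (k i) => (u.2 : ℕ)) hφe⟩

end Units

theorem hedonicEquilibrium_of_matching {ι κ : Type*} [Fintype ι] [Fintype κ] [DecidableEq ι]
    [DecidableEq κ] [DecidableEq Z] {k : ι → ℕ} {l : κ → ℕ} {α : ι → Z → ℝ} {γ : Z → κ → ℝ}
    {p : Z → ℝ} {M : Finset ((Σ i, Fin (k i)) × Σ j, Fin (l j))}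
    (hfst : Set.InjOn Prod.fst (SetLike.coe M)) (hsnd : Set.InjOn Prod.snd (SetLike.coe M))
    {q : (Σ i, Fin (k i)) × (Σ j, Fin (l j)) → Z}
    (hqα : ∀ e ∈ M, q e ∈ optimalQualities α p e.1.1)
    (hqγ : ∀ e ∈ M, q e ∈ optimalQualities (fun j z => γ z j) (-p) e.2.1)
    (hcovα : ∀ u : Σ i, Fin (k i), 0 < indirectU α p u.1 → ∃ e ∈ M, e.1 = u)
    (hcovγ : ∀ v : Σ j, Fin (l j), 0 < indirectV γ p v.1 → ∃ e ∈ M, e.2 = v) :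
    HedonicEquilibrium (fun i => (k i : ℝ)) (fun j => (l j : ℝ)) α γ p
      (fun i z => unitFlow M (fun e => e.1.1) q i z)
      (fun z j => unitFlow M (fun e => e.2.1) q j z) := by
  refine ⟨⟨fun _ _ => Nat.cast_nonneg _, fun _ _ => Nat.cast_nonneg _, fun i => ?_, fun j => ?_,
    fun z => ?_⟩, fun i z h => ?_, fun z j h => ?_, fun i h => ?_, fun j h => ?_⟩
  · rw [← Nat.cast_sum, sum_unitFlow_right]
    exact Nat.cast_le.2 (card_filter_sigma_fst_le M hfst i)
  · rw [← Nat.cast_sum, sum_unitFlow_right]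
    exact Nat.cast_le.2 (card_filter_sigma_fst_le M hsnd j)
  · rw [← Nat.cast_sum, ← Nat.cast_sum, sum_unitFlow_left, sum_unitFlow_left]
  · obtain ⟨e, he, rfl, rfl⟩ := exists_mem_of_unitFlow_pos _ _ _ (Nat.cast_pos.1 h)
    exact (mem_optimalQualities _ _ _).1 (hqα e he)
  · obtain ⟨e, he, rfl, rfl⟩ := exists_mem_of_unitFlow_pos _ _ _ (Nat.cast_pos.1 h)
    rw [indirectV_eq_indirectU_neg, ← (mem_optimalQualities _ _ _).1 (hqγ e he), Pi.neg_apply,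
      sub_eq_add_neg]
  · rw [← Nat.cast_sum, sum_unitFlow_right,
      card_filter_sigma_fst_eq M hfst fun u hu => hcovα u (hu ▸ h)]
  · rw [← Nat.cast_sum, sum_unitFlow_right,
      card_filter_sigma_fst_eq M hsnd fun v hv => hcovγ v (hv ▸ h)]

theorem exists_matching_of_forall_dualValue_le {ι κ : Type*} [Fintype ι] [Fintype κ] (k : ι → ℕ)
    (l : κ → ℕ) (α : ι → Z → ℝ) (β : κ → Z → ℝ) {p : Z → ℝ}
    (hp : ∀ q, dualValue (k ·) (l ·) α β p ≤ dualValue (k ·) (l ·) α β q) :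
    ∃ (M : Finset ((Σ i, Fin (k i)) × Σ j, Fin (l j))) (q : _ → Z),
      Set.InjOn Prod.fst (SetLike.coe M) ∧ Set.InjOn Prod.snd (SetLike.coe M) ∧
      (∀ e ∈ M, q e ∈ optimalQualities α p e.1.1 ∧ q e ∈ optimalQualities β (-p) e.2.1) ∧
      (∀ u : Σ i, Fin (k i), 0 < indirectU α p u.1 → ∃ e ∈ M, e.1 = u) ∧
      ∀ v : Σ j, Fin (l j), 0 < indirectU β (-p) v.1 → ∃ e ∈ M, e.2 = v := by
  classical
  have hk : ∀ i, (0 : ℝ) ≤ k i := fun i => Nat.cast_nonneg _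
  have hl : ∀ j, (0 : ℝ) ≤ l j := fun j => Nat.cast_nonneg _
  have hp' : ∀ q, dualValue (l ·) (k ·) β α (-p) ≤ dualValue (l ·) (k ·) β α q := fun q => by
    simpa only [dualValue_neg, neg_neg] using hp (-q)
  obtain ⟨f, hf, hfr⟩ := exists_injective_units_of_sum_le k l
    (fun i j => ¬Disjoint (optimalQualities α p i) (optimalQualities β (-p) j))
    {i | 0 < indirectU α p i}
    fun s hs => by exact_mod_cast sum_le_sum_of_forall_dualValue_le α β hk hl hp hs
  obtain ⟨g, hg, hgr⟩ := exists_injective_units_of_sum_le l k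
    (fun j i => ¬Disjoint (optimalQualities β (-p) j) (optimalQualities α (-(-p)) i))
    {j | 0 < indirectU β (-p) j}
    fun s hs => by exact_mod_cast sum_le_sum_of_forall_dualValue_le β α hl hk hp' hs
  obtain ⟨M, hMr, hfst, hsnd, hcovα, hcovβ⟩ := exists_matching_covering
    (fun (u : Σ i, Fin (k i)) (v : Σ j, Fin (l j)) =>
      ¬Disjoint (optimalQualities α p u.1) (optimalQualities β (-p) v.1))
    (Pd := {u | u.1 ∈ {i | 0 < indirectU α p i}}) (Cd := {v | v.1 ∈ {j | 0 < indirectU β (-p) j}})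
    hf hfr hg (fun v => by simpa only [neg_neg, disjoint_comm] using hgr v)
  choose! q hq using fun e (he : e ∈ M) => not_disjoint_iff.1 (hMr e he)
  exact ⟨M.toFinset, q, by simpa using hfst, by simpa using hsnd,
    fun e he => hq e (Set.mem_toFinset.1 he), fun u hu => by simpa using hcovα u hu,
    fun v hv => by simpa using hcovβ v hv⟩

/-- Theorem 2(iii): if the masses are integral, there is an integral hedonic equilibrium. -/
theorem integral_hedonic_equilibrium_exists (n : X → ℝ) (m : Y → ℝ)
    (hn : ∀ x, ∃ k : ℕ, n x = k) (hm : ∀ y, ∃ k : ℕ, m y = k)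
    (α : X → Z → ℝ) (γ : Z → Y → ℝ) :
    ∃ (p : Z → ℝ) (μs : X → Z → ℝ) (μd : Z → Y → ℝ),
      HedonicEquilibrium n m α γ p μs μd ∧
        (∀ x z, ∃ k : ℕ, μs x z = k) ∧ (∀ z y, ∃ k : ℕ, μd z y = k) := by
  classical
  choose k hk using hn
  choose l hl using hm
  obtain rfl : n = fun x => (k x : ℝ) := funext hk
  obtain rfl : m = fun y => (l y : ℝ) := funext hl
  obtain ⟨p, hp⟩ := exists_forall_dualValue_le α (fun y z => γ z y)
    (fun x => Nat.cast_nonneg (k x)) (fun y => Nat.cast_nonneg (l y))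
  obtain ⟨M, q, hfst, hsnd, hq, hcovα, hcovγ⟩ := exists_matching_of_forall_dualValue_le k l α _ hp
  refine ⟨p, _, _, hedonicEquilibrium_of_matching hfst hsnd (fun e he => (hq e he).1)
    (fun e he => (hq e he).2) hcovα fun v hv => hcovγ v ?_,
    fun _ _ => ⟨_, rfl⟩, fun _ _ => ⟨_, rfl⟩⟩
  rwa [indirectV_eq_indirectU_neg] at hv
end

section
/- Sufficiency direction of the Proposition on equilibrium prices: suppose the feasible flow (μˢ, μᵈ) maximizes the primal objective among feasible flows, the triple (u, v, p₀) is dual feasible and minimizes the dual objective among dual feasible triples, and p : Z → ℝ satisfies max_y (γ z y − v y) ≤ p z ≤ min_x (u x − α x z) for every z. Then (p, μˢ, μᵈ) is a hedonic equilibrium. -/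
open Finset MeasureTheory Real

variable {X Y Z : Type*} [Fintype X] [Fintype Y] [Fintype Z]
  [Nonempty X] [Nonempty Y] [Nonempty Z]

/-!
Optimal values of the primal (welfare) and dual (surplus) programs coincide: this is LP
duality, obtained from Farkas' lemma, which in turn rests on finitely generated cones being
closed (conic Carathéodory). The price bounds say precisely that `(u, v, p)` is dual feasible,
with the same dual objective as `(u, v, p₀)`. The duality gap of `(u, v, p)` against the optimal
flow is a sum of nonnegative complementary-slackness terms, so all of them vanish, and these
vanishing terms are exactly the rationality and participation conditions of equilibrium.
-/

lemma eq_zero_of_sum_nonpos {ι : Type*} [Fintype ι] {f : ι → ℝ} (hf : ∀ i, 0 ≤ f i)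
    (h : ∑ i, f i ≤ 0) (i : ι) : f i = 0 :=
  (sum_eq_zero_iff_of_nonneg fun i _ => hf i).mp (le_antisymm h (sum_nonneg fun i _ => hf i)) i
    (mem_univ i)

section ConicalHull

variable {ι E : Type*} [AddCommGroup E] [Module ℝ E]

lemma exists_sum_smul_eq_of_not_linearIndepOn [DecidableEq ι] {g : ι → E} {s : Finset ι}
    (hs : ¬LinearIndepOn ℝ g s) {c : ι → ℝ} (hc : ∀ i ∈ s, 0 ≤ c i) :
    ∃ i₀ ∈ s, ∃ c' : ι → ℝ, (∀ i ∈ s, 0 ≤ c' i) ∧ c' i₀ = 0 ∧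
      ∑ i ∈ s, c' i • g i = ∑ i ∈ s, c i • g i := by
  obtain ⟨f, hf, i₁, hi₁, hf₁⟩ := not_linearIndepOn_finset_iff.mp hs
  wlog hpos : 0 < f i₁ generalizing f
  · exact this (-f) (by simp [hf]) (by simpa using hf₁)
      (by simpa using lt_of_le_of_ne (not_lt.mp hpos) hf₁)
  -- move `c` against the dependence `f` until the first coefficient vanishes
  obtain ⟨i₀, hi₀, hmin⟩ := (s.filter (0 < f ·)).exists_min_image (fun i => c i / f i)
    ⟨i₁, mem_filter.mpr ⟨hi₁, hpos⟩⟩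
  rw [mem_filter] at hi₀
  have ht : 0 ≤ c i₀ / f i₀ := div_nonneg (hc i₀ hi₀.1) hi₀.2.le
  refine ⟨i₀, hi₀.1, fun i => c i - c i₀ / f i₀ * f i, fun i hi => ?_, ?_, ?_⟩
  · rcases le_or_gt (f i) 0 with hfi | hfi
    · nlinarith [hc i hi]
    · have := hmin i (mem_filter.mpr ⟨hi, hfi⟩)
      rw [le_div_iff₀ hfi] at this
      linarith
  · simp [div_mul_cancel₀ _ hi₀.2.ne']
  · simp [sub_smul, mul_smul, sum_sub_distrib, ← smul_sum, hf]

/-- Carathéodory's theorem for cones. -/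
theorem exists_linearIndepOn_sum_smul_eq (g : ι → E) (s : Finset ι) (c : ι → ℝ)
    (hc : ∀ i ∈ s, 0 ≤ c i) :
    ∃ t ⊆ s, LinearIndepOn ℝ g t ∧ ∃ c' : ι → ℝ, (∀ i ∈ t, 0 ≤ c' i) ∧
      ∑ i ∈ t, c' i • g i = ∑ i ∈ s, c i • g i := by
  classical
  induction s using Finset.strongInduction generalizing c with
  | H s ih =>
  by_cases hs : LinearIndepOn ℝ g s
  · exact ⟨s, subset_rfl, hs, c, hc, rfl⟩
  obtain ⟨i₀, hi₀, c', hc', hc'i₀, hsum⟩ := exists_sum_smul_eq_of_not_linearIndepOn hs hc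
  obtain ⟨t, hts, ht, c'', hc'', hsum'⟩ :=
    ih (s.erase i₀) (erase_ssubset hi₀) c' fun i hi => hc' i (mem_of_mem_erase hi)
  refine ⟨t, hts.trans (erase_subset _ _), ht, c'', hc'', ?_⟩
  rw [hsum', sum_erase _ (by simp [hc'i₀]), hsum]

variable [Fintype ι] [TopologicalSpace E] [IsTopologicalAddGroup E] [ContinuousSMul ℝ E]

theorem isClosed_image_linearCombination_Ici [T2Space E] (g : ι → E) :
    IsClosed (Fintype.linearCombination ℝ g '' Set.Ici 0) := by
  classical
  have hunion : Fintype.linearCombination ℝ g '' Set.Ici 0 =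
      ⋃ t : {t : Finset ι // LinearIndepOn ℝ g t},
        Fintype.linearCombination ℝ (fun i : t.1 => g i) '' Set.Ici 0 := by
    ext x
    simp only [Set.mem_image, Set.mem_iUnion, Set.mem_Ici, Fintype.linearCombination_apply,
      Pi.le_def, Pi.zero_apply]
    constructor
    · rintro ⟨c, hc, rfl⟩
      obtain ⟨t, -, ht, c', hc', hsum⟩ := exists_linearIndepOn_sum_smul_eq g univ c fun i _ => hc i
      exact ⟨⟨t, ht⟩, fun i => c' i, fun i => hc' i i.2,
        (sum_coe_sort t fun i => c' i • g i).trans hsum⟩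
    · rintro ⟨t, c, hc, rfl⟩
      refine ⟨fun i => if h : i ∈ t.1 then c ⟨i, h⟩ else 0, fun i => ?_, ?_⟩
      · dsimp only
        split_ifs
        exacts [hc _, le_rfl]
      · rw [← sum_subset (subset_univ t.1) (fun i _ hi => by simp [hi]), ← sum_coe_sort]
        simp
  rw [hunion]
  exact isClosed_iUnion_of_finite fun t =>
    (LinearMap.isClosedEmbedding_of_injective (LinearMap.ker_eq_bot.mpr
      (linearIndependent_iff_injective_fintypeLinearCombination.mp t.2))).isClosedMap _ isClosed_Ici

/-- Farkas' lemma. -/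
theorem exists_strongDual_of_notMem_image_linearCombination [T2Space E]
    [LocallyConvexSpace ℝ E] (g : ι → E) {w : E}
    (hw : w ∉ Fintype.linearCombination ℝ g '' Set.Ici 0) :
    ∃ f : StrongDual ℝ E, (∀ i, f (g i) ≤ 0) ∧ 0 < f w := by
  classical
  let C : ProperCone ℝ E :=
    ⟨(PointedCone.positive ℝ (ι → ℝ)).map (Fintype.linearCombination ℝ g),
      isClosed_image_linearCombination_Ici g⟩
  obtain ⟨f, hfC, hfw⟩ := C.hyperplane_separation_point hw
  refine ⟨-f, fun i => ?_, by simpa using hfw⟩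
  have : g i ∈ C := ⟨Pi.single i 1, Pi.single_nonneg.mpr zero_le_one, by
    simp [Fintype.linearCombination_apply, Pi.single_apply]⟩
  simpa using hfC _ this

end ConicalHull

section LinearProgramming

open Matrix

variable {I J K : Type*} [Fintype I] [Fintype J] [Fintype K]

/-- Farkas' lemma for systems of linear inequalities. -/
theorem Matrix.exists_certificate_of_not_exists_mulVec_le (M : Matrix I K ℝ) (w : I → ℝ)
    (h : ¬∃ x, 0 ≤ x ∧ M *ᵥ x ≤ w) : ∃ y, 0 ≤ y ∧ 0 ≤ y ᵥ* M ∧ y ⬝ᵥ w < 0 := by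
  classical
  -- the columns of `M`, and one slack direction per row
  let g : K ⊕ I → I → ℝ := Sum.elim (fun k i => M i k) fun i j => if i = j then 1 else 0
  have hw : w ∉ Fintype.linearCombination ℝ g '' Set.Ici 0 := by
    rintro ⟨c, hc, rfl⟩
    refine h ⟨c ∘ Sum.inl, fun k => hc (Sum.inl k), fun i => ?_⟩
    have := hc (Sum.inr i)
    simp [g, Fintype.linearCombination_apply, Fintype.sum_sum_type, mulVec, dotProduct,
      mul_comm] at this ⊢
    linarith
  obtain ⟨f, hf, hfw⟩ := exists_strongDual_of_notMem_image_linearCombination g hw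
  have hf_eq (v : I → ℝ) : f v = ∑ i, v i * f (g (Sum.inr i)) :=
    LinearMap.pi_apply_eq_sum_univ f.toLinearMap v
  refine ⟨fun i => -f (g (Sum.inr i)), fun i => neg_nonneg.mpr (hf (Sum.inr i)), fun k => ?_, ?_⟩
  · have := hf (Sum.inl k)
    rw [hf_eq] at this
    simp [g, vecMul, dotProduct, mul_comm] at this ⊢
    linarith
  · rw [hf_eq] at hfw
    simp [dotProduct, mul_comm] at hfw ⊢
    linarith

/-- Strong duality for `max c ⬝ᵥ x` subject to `0 ≤ x`, `A *ᵥ x ≤ b`. -/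
theorem Matrix.exists_dual_lt_of_isMax (A : Matrix I J ℝ) (b : I → ℝ) (c x : J → ℝ)
    (hx : 0 ≤ x) (hAx : A *ᵥ x ≤ b)
    (hmax : ∀ x', 0 ≤ x' → A *ᵥ x' ≤ b → c ⬝ᵥ x' ≤ c ⬝ᵥ x) {ε : ℝ} (hε : 0 < ε) :
    ∃ y, 0 ≤ y ∧ c ≤ y ᵥ* A ∧ y ⬝ᵥ b < c ⬝ᵥ x + ε := by
  -- no feasible point reaches the objective value `c ⬝ᵥ x + ε`
  have hinfeasible : ¬∃ x', 0 ≤ x' ∧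
      A.fromRows (replicateRow Unit (-c)) *ᵥ x' ≤ Sum.elim b fun _ => -(c ⬝ᵥ x + ε) := by
    rintro ⟨x', hx', hle⟩
    rw [fromRows_mulVec, Sum.elim_le_elim_iff] at hle
    have hobj := hle.2 ()
    simp only [replicateRow_mulVec_eq_const, Function.const_apply, neg_dotProduct,
      neg_le_neg_iff] at hobj
    linarith [hmax x' hx' hle.1]
  obtain ⟨y, hy, hyM, hyw⟩ := exists_certificate_of_not_exists_mulVec_le _ _ hinfeasible
  obtain ⟨y₀, t, rfl⟩ : ∃ y₀ t, y = Sum.elim y₀ fun _ => t :=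
    ⟨y ∘ Sum.inl, y (Sum.inr ()), by ext (_ | _) <;> rfl⟩
  rw [vecMul_fromRows] at hyM
  rw [sumElim_dotProduct_sumElim,
    show ((fun _ => t) ⬝ᵥ fun _ : Unit => -(c ⬝ᵥ x + ε)) = -(t * (c ⬝ᵥ x + ε)) by
      simp only [dotProduct, Fintype.sum_unique]; ring] at hyw
  have hdual : t • c ≤ y₀ ᵥ* A := fun j => by
    have := hyM j
    simp [vecMul, dotProduct] at this ⊢
    linarith
  have hweak : t * (c ⬝ᵥ x) ≤ y₀ ⬝ᵥ b := calc
    t * (c ⬝ᵥ x) = (t • c) ⬝ᵥ x := (smul_dotProduct t c x).symm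
    _ ≤ (y₀ ᵥ* A) ⬝ᵥ x := dotProduct_le_dotProduct_of_nonneg_right hdual hx
    _ = y₀ ⬝ᵥ (A *ᵥ x) := (dotProduct_mulVec y₀ A x).symm
    _ ≤ y₀ ⬝ᵥ b := dotProduct_le_dotProduct_of_nonneg_left hAx fun i => hy (Sum.inl i)
  have ht : 0 < t := pos_of_mul_pos_left (by linarith) hε.le
  refine ⟨t⁻¹ • y₀, fun i => smul_nonneg (inv_nonneg.mpr ht.le) (hy (Sum.inl i)), fun j => ?_, ?_⟩
  · rw [smul_vecMul, Pi.smul_apply, smul_eq_mul, le_inv_mul_iff₀ ht]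
    exact hdual j
  · rw [smul_dotProduct, smul_eq_mul, inv_mul_lt_iff₀ ht]
    linarith

end LinearProgramming

section FlowProgram

open Matrix

variable {X Y Z : Type*}

section IndirectUtility

variable [Fintype Z] [Nonempty Z] {α : X → Z → ℝ} {γ : Z → Y → ℝ} {u : X → ℝ} {v : Y → ℝ}
  {p : Z → ℝ}

lemma le_indirectU (x : X) (z : Z) : α x z + p z ≤ indirectU α p x :=
  (le_sup' (fun z => α x z + p z) (mem_univ z)).trans (le_max_left _ _)

lemma le_indirectV (z : Z) (y : Y) : γ z y - p z ≤ indirectV γ p y :=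
  (le_sup' (fun z => γ z y - p z) (mem_univ z)).trans (le_max_left _ _)

lemma DualFeasible.indirectU_le (h : DualFeasible α γ u v p) (x : X) : indirectU α p x ≤ u x :=
  max_le (sup'_le _ _ fun z _ => h.2.2.1 x z) (h.1 x)

lemma DualFeasible.indirectV_le (h : DualFeasible α γ u v p) (y : Y) : indirectV γ p y ≤ v y :=
  max_le (sup'_le _ _ fun z _ => h.2.2.2 z y) (h.2.1 y)

end IndirectUtility

def flowVec (μs : X → Z → ℝ) (μd : Z → Y → ℝ) : (X × Z) ⊕ (Z × Y) → ℝ :=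
  Sum.elim (Function.uncurry μs) (Function.uncurry μd)

lemma flowVec_le_flowVec_iff {μs μs' : X → Z → ℝ} {μd μd' : Z → Y → ℝ} :
    flowVec μs μd ≤ flowVec μs' μd' ↔ (∀ x z, μs x z ≤ μs' x z) ∧ ∀ z y, μd z y ≤ μd' z y := by
  simp [flowVec, Pi.le_def]

lemma flowVec_curry (w : (X × Z) ⊕ (Z × Y) → ℝ) :
    flowVec (Function.curry (w ∘ Sum.inl)) (Function.curry (w ∘ Sum.inr)) = w := by
  ext (_ | _) <;> rfl

variable [Fintype X] [Fintype Y] [Fintype Z]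

lemma primalObj_eq_dotProduct (α : X → Z → ℝ) (γ : Z → Y → ℝ) (μs : X → Z → ℝ)
    (μd : Z → Y → ℝ) : primalObj α γ μs μd = flowVec α γ ⬝ᵥ flowVec μs μd := by
  simp [primalObj, flowVec, dotProduct, Fintype.sum_sum_type, Fintype.sum_prod_type, mul_comm]

lemma dualObj_eq_dotProduct (n : X → ℝ) (m : Y → ℝ) (u : X → ℝ) (v : Y → ℝ) (q : Z ⊕ Z → ℝ) :
    dualObj n m u v = Sum.elim (Sum.elim u v) q ⬝ᵥ Sum.elim (Sum.elim n m) 0 := by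
  simp [dualObj, dotProduct, Fintype.sum_sum_type, mul_comm]

section

variable [DecidableEq X] [DecidableEq Y] [DecidableEq Z]

/-- Rows: capacity of each producer type, capacity of each consumer type, and the two
inequalities `∑ y, μd z y ≤ ∑ x, μs x z` and `∑ x, μs x z ≤ ∑ y, μd z y` of market clearing. -/
def flowMatrix : Matrix ((X ⊕ Y) ⊕ (Z ⊕ Z)) ((X × Z) ⊕ (Z × Y)) ℝ :=
  Matrix.of fun
    | .inl (.inl x), .inl (x', _) => (Pi.single x 1 : X → ℝ) x'
    | .inl (.inr y), .inr (_, y') => (Pi.single y 1 : Y → ℝ) y'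
    | .inr (.inl z), .inl (_, z') => -(Pi.single z 1 : Z → ℝ) z'
    | .inr (.inl z), .inr (z', _) => (Pi.single z 1 : Z → ℝ) z'
    | .inr (.inr z), .inl (_, z') => (Pi.single z 1 : Z → ℝ) z'
    | .inr (.inr z), .inr (z', _) => -(Pi.single z 1 : Z → ℝ) z'
    | _, _ => 0

lemma flowMatrix_mulVec_flowVec (μs : X → Z → ℝ) (μd : Z → Y → ℝ) :
    flowMatrix *ᵥ flowVec μs μd =
      Sum.elim (Sum.elim (fun x => ∑ z, μs x z) fun y => ∑ z, μd z y)
        (Sum.elim (fun z => ∑ y, μd z y - ∑ x, μs x z) fun z => ∑ x, μs x z - ∑ y, μd z y) := by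
  ext ((x | y) | (z | z)) <;>
    simp only [flowMatrix, flowVec, mulVec, dotProduct, Fintype.sum_sum_type,
      Fintype.sum_prod_type, of_apply, Sum.elim_inl, Sum.elim_inr, Function.uncurry_apply_pair] <;>
    simp [Pi.single_apply, Finset.sum_ite_irrel] <;> ring

lemma vecMul_flowMatrix (u : X → ℝ) (v : Y → ℝ) (q q' : Z → ℝ) :
    Sum.elim (Sum.elim u v) (Sum.elim q q') ᵥ* flowMatrix =
      flowVec (fun x z => u x - (q z - q' z)) fun z y => v y + (q z - q' z) := by
  ext (⟨x, z⟩ | ⟨z, y⟩) <;>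
    simp [flowMatrix, flowVec, vecMul, dotProduct, Fintype.sum_sum_type, Pi.single_apply] <;> ring

lemma feasibleFlow_iff {n : X → ℝ} {m : Y → ℝ} {μs : X → Z → ℝ} {μd : Z → Y → ℝ} :
    FeasibleFlow n m μs μd ↔
      0 ≤ flowVec μs μd ∧ flowMatrix *ᵥ flowVec μs μd ≤ Sum.elim (Sum.elim n m) 0 := by
  rw [flowMatrix_mulVec_flowVec]
  simp only [FeasibleFlow, Pi.le_def, Sum.forall, flowVec, Sum.elim_inl,
    Sum.elim_inr, Prod.forall, Function.uncurry_apply_pair, Pi.zero_apply, sub_nonpos,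
    le_antisymm_iff (a := ∑ x, μs x _), forall_and]
  tauto

end

theorem dualObj_le_primalObj {n : X → ℝ} {m : Y → ℝ} {α : X → Z → ℝ} {γ : Z → Y → ℝ}
    {μs : X → Z → ℝ} {μd : Z → Y → ℝ} {u : X → ℝ} {v : Y → ℝ}
    (hflow : FeasibleFlow n m μs μd)
    (hmax : ∀ μs' μd', FeasibleFlow n m μs' μd' → primalObj α γ μs' μd' ≤ primalObj α γ μs μd)
    (hmin : ∀ u' v' p', DualFeasible α γ u' v' p' → dualObj n m u v ≤ dualObj n m u' v') :
    dualObj n m u v ≤ primalObj α γ μs μd := by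
  classical
  rw [feasibleFlow_iff] at hflow
  refine le_of_forall_pos_lt_add fun ε hε => ?_
  obtain ⟨y, hy, hyA, hyb⟩ := flowMatrix.exists_dual_lt_of_isMax _ (flowVec α γ) _ hflow.1 hflow.2
    (fun w hw hAw => by
      rw [← flowVec_curry w] at hw hAw ⊢
      simpa only [primalObj_eq_dotProduct] using hmax _ _ (feasibleFlow_iff.mpr ⟨hw, hAw⟩)) hε
  obtain ⟨u', v', q, q', rfl⟩ : ∃ u' v' q q', y = Sum.elim (Sum.elim u' v') (Sum.elim q q') :=
    ⟨_, _, _, _, by ext ((_ | _) | (_ | _)) <;> rfl⟩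
  rw [vecMul_flowMatrix, flowVec_le_flowVec_iff] at hyA
  have hdual : DualFeasible α γ u' v' fun z => q z - q' z :=
    ⟨fun x => hy (.inl (.inl x)), fun y => hy (.inl (.inr y)),
      fun x z => by linarith [hyA.1 x z], fun z y => by linarith [hyA.2 z y]⟩
  rw [← dualObj_eq_dotProduct, ← primalObj_eq_dotProduct] at hyb
  linarith [hmin _ _ _ hdual]

lemma dualObj_sub_primalObj (n : X → ℝ) (m : Y → ℝ) (α : X → Z → ℝ) (γ : Z → Y → ℝ)
    {μs : X → Z → ℝ} {μd : Z → Y → ℝ} (hclear : ∀ z, ∑ x, μs x z = ∑ y, μd z y)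
    (u : X → ℝ) (v : Y → ℝ) (p : Z → ℝ) :
    dualObj n m u v - primalObj α γ μs μd =
      ∑ x, (n x - ∑ z, μs x z) * u x + ∑ y, (m y - ∑ z, μd z y) * v y +
        ∑ x, ∑ z, μs x z * (u x - (α x z + p z)) + ∑ z, ∑ y, μd z y * (v y - (γ z y - p z)) := by
  have hprice : ∑ x, ∑ z, μs x z * p z = ∑ z, ∑ y, μd z y * p z := by
    rw [sum_comm]
    simp_rw [← sum_mul, hclear]
  have hswap : ∑ y, ∑ z, μd z y * v y = ∑ z, ∑ y, μd z y * v y := sum_comm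
  simp only [dualObj, primalObj, mul_sub, sub_mul, mul_add, sum_sub_distrib, sum_add_distrib,
    sum_mul]
  linarith

theorem complementary_slackness {n : X → ℝ} {m : Y → ℝ} {α : X → Z → ℝ} {γ : Z → Y → ℝ}
    {μs : X → Z → ℝ} {μd : Z → Y → ℝ} {u : X → ℝ} {v : Y → ℝ} {p : Z → ℝ}
    (hflow : FeasibleFlow n m μs μd) (hdual : DualFeasible α γ u v p)
    (hgap : dualObj n m u v ≤ primalObj α γ μs μd) :
    (∀ x, (n x - ∑ z, μs x z) * u x = 0) ∧ (∀ y, (m y - ∑ z, μd z y) * v y = 0) ∧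
      (∀ x z, μs x z * (u x - (α x z + p z)) = 0) ∧ ∀ z y, μd z y * (v y - (γ z y - p z)) = 0 := by
  obtain ⟨hs, hd, hn, hm, hclear⟩ := hflow
  obtain ⟨hu, hv, hα, hγ⟩ := hdual
  have h₁ : ∀ x, 0 ≤ (n x - ∑ z, μs x z) * u x := fun x => mul_nonneg (sub_nonneg.2 (hn x)) (hu x)
  have h₂ : ∀ y, 0 ≤ (m y - ∑ z, μd z y) * v y := fun y => mul_nonneg (sub_nonneg.2 (hm y)) (hv y)
  have h₃ : ∀ x z, 0 ≤ μs x z * (u x - (α x z + p z)) :=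
    fun x z => mul_nonneg (hs x z) (sub_nonneg.2 (hα x z))
  have h₄ : ∀ z y, 0 ≤ μd z y * (v y - (γ z y - p z)) :=
    fun z y => mul_nonneg (hd z y) (sub_nonneg.2 (hγ z y))
  have h₃' : ∀ x, 0 ≤ ∑ z, μs x z * (u x - (α x z + p z)) := fun x => sum_nonneg fun z _ => h₃ x z
  have h₄' : ∀ z, 0 ≤ ∑ y, μd z y * (v y - (γ z y - p z)) := fun z => sum_nonneg fun y _ => h₄ z y
  have hsum := dualObj_sub_primalObj n m α γ hclear u v p
  have S₁ := sum_nonneg fun x (_ : x ∈ univ) => h₁ x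
  have S₂ := sum_nonneg fun y (_ : y ∈ univ) => h₂ y
  have S₃ := sum_nonneg fun x (_ : x ∈ univ) => h₃' x
  have S₄ := sum_nonneg fun z (_ : z ∈ univ) => h₄' z
  refine ⟨eq_zero_of_sum_nonpos h₁ (by linarith), eq_zero_of_sum_nonpos h₂ (by linarith),
    fun x => eq_zero_of_sum_nonpos (h₃ x) (eq_zero_of_sum_nonpos h₃' (by linarith) x).le,
    fun z => eq_zero_of_sum_nonpos (h₄ z) (eq_zero_of_sum_nonpos h₄' (by linarith) z).le⟩

theorem hedonicEquilibrium_of_dualObj_le [Nonempty Z] {α : X → Z → ℝ} {γ : Z → Y → ℝ}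
    {u : X → ℝ} {v : Y → ℝ} {p : Z → ℝ} {n : X → ℝ} {m : Y → ℝ} {μs : X → Z → ℝ}
    {μd : Z → Y → ℝ} (hflow : FeasibleFlow n m μs μd) (hdual : DualFeasible α γ u v p)
    (hgap : dualObj n m u v ≤ primalObj α γ μs μd) : HedonicEquilibrium n m α γ p μs μd := by
  obtain ⟨hsupply, hdemand, hproducer, hconsumer⟩ := complementary_slackness hflow hdual hgap
  refine ⟨hflow, fun x z hxz => ?_, fun z y hzy => ?_, fun x hx => ?_, fun y hy => ?_⟩
  · have hbind := sub_eq_zero.mp ((mul_eq_zero.mp (hproducer x z)).resolve_left hxz.ne')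
    exact le_antisymm (le_indirectU x z) (hbind ▸ hdual.indirectU_le x)
  · have hbind := sub_eq_zero.mp ((mul_eq_zero.mp (hconsumer z y)).resolve_left hzy.ne')
    exact le_antisymm (le_indirectV z y) (hbind ▸ hdual.indirectV_le y)
  · have hu : 0 < u x := hx.trans_le (hdual.indirectU_le x)
    exact (sub_eq_zero.mp ((mul_eq_zero.mp (hsupply x)).resolve_right hu.ne')).symm
  · have hv : 0 < v y := hy.trans_le (hdual.indirectV_le y)
    exact (sub_eq_zero.mp ((mul_eq_zero.mp (hdemand y)).resolve_right hv.ne')).symm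

end FlowProgram

theorem price_bounds_sufficient_general (n : X → ℝ) (m : Y → ℝ)
    (α : X → Z → ℝ) (γ : Z → Y → ℝ)
    (μs : X → Z → ℝ) (μd : Z → Y → ℝ) (u : X → ℝ) (v : Y → ℝ) (p₀ p : Z → ℝ)
    (hflow : FeasibleFlow n m μs μd)
    (hmax : ∀ (μs' : X → Z → ℝ) (μd' : Z → Y → ℝ), FeasibleFlow n m μs' μd' →
      primalObj α γ μs' μd' ≤ primalObj α γ μs μd)
    (hdual : DualFeasible α γ u v p₀)
    (hmin : ∀ (u' : X → ℝ) (v' : Y → ℝ) (p' : Z → ℝ), DualFeasible α γ u' v' p' →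
      dualObj n m u v ≤ dualObj n m u' v')
    (hp : ∀ z, univ.sup' univ_nonempty (fun y => γ z y - v y) ≤ p z ∧
      p z ≤ univ.inf' univ_nonempty (fun x => u x - α x z)) :
    HedonicEquilibrium n m α γ p μs μd := by
  have hfeas : DualFeasible α γ u v p :=
    ⟨hdual.1, hdual.2.1,
      fun x z => by linarith [(hp z).2.trans (inf'_le (fun x => u x - α x z) (mem_univ x))],
      fun z y => by linarith [(le_sup' (fun y => γ z y - v y) (mem_univ y)).trans (hp z).1]⟩
  exact hedonicEquilibrium_of_dualObj_le hflow hfeas (dualObj_le_primalObj hflow hmax hmin)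

/-- Sufficiency direction of the Proposition: any price vector within the bounds, combined
with a primal optimal flow, forms a hedonic equilibrium. -/
theorem price_bounds_sufficient (n : X → ℝ) (m : Y → ℝ)
    (hn : ∀ x, 0 ≤ n x) (hm : ∀ y, 0 ≤ m y) (α : X → Z → ℝ) (γ : Z → Y → ℝ)
    (μs : X → Z → ℝ) (μd : Z → Y → ℝ) (u : X → ℝ) (v : Y → ℝ) (p₀ p : Z → ℝ)
    (hflow : FeasibleFlow n m μs μd)
    (hmax : ∀ (μs' : X → Z → ℝ) (μd' : Z → Y → ℝ), FeasibleFlow n m μs' μd' →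
      primalObj α γ μs' μd' ≤ primalObj α γ μs μd)
    (hdual : DualFeasible α γ u v p₀)
    (hmin : ∀ (u' : X → ℝ) (v' : Y → ℝ) (p' : Z → ℝ), DualFeasible α γ u' v' p' →
      dualObj n m u v ≤ dualObj n m u' v')
    (hp : ∀ z, univ.sup' univ_nonempty (fun y => γ z y - v y) ≤ p z ∧
      p z ≤ univ.inf' univ_nonempty (fun x => u x - α x z)) :
    HedonicEquilibrium n m α γ p μs μd :=
  price_bounds_sufficient_general n m α γ μs μd u v p₀ p hflow hmax hdual hmin hp
end
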